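/- arXiv:2603.21026 — 2 statements merged into one kernel-verified Lean document; each statement's English description precedes it below -/
import Mathlib

section
/- Let g ∈ ℂ^N and A, B > 0. The family {T_i g : 1 ≤ i ≤ N} is a frame for ℂ^N with frame bounds A and B if and only if √(A/N) ≤ |ĝ(l)| ≤ √(B/N) for all 1 ≤ l ≤ N. -/
open scoped ComplexConjugate BigOperators

/-- Graph Fourier transform: `(gft χ f) l = ⟨f, χ_l⟩ = ∑ n, f n * conj (χ l n)`. -/
noncomputable def gft {N : ℕ} (χ : Fin N → EuclideanSpace ℂ (Fin N))
    (f : EuclideanSpace ℂ (Fin N)) : EuclideanSpace ℂ (Fin N) :=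
  WithLp.toLp 2 (fun l => ∑ n, f n * conj (χ l n))

/-- Generalized translation: `(T_i f)(n) = √N · ∑ l, f̂(l) · conj (χ l i) · χ l n`. -/
noncomputable def gtrans {N : ℕ} (χ : Fin N → EuclideanSpace ℂ (Fin N))
    (i : Fin N) (f : EuclideanSpace ℂ (Fin N)) : EuclideanSpace ℂ (Fin N) :=
  WithLp.toLp 2 (fun n => (Real.sqrt N : ℂ) * ∑ l, gft χ f l * conj (χ l i) * χ l n)

/-!
Expanding `T_i g` in the basis `χ` gives
`⟨f, T_i g⟩ = √N · ∑_l f̂(l) · conj ĝ(l) · χ_l(i)`, the `i`-th coordinate of `√N` times the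
vector whose `χ`-coefficients are `f̂(l) · conj ĝ(l)`. Parseval's identity then turns the frame sum
into `∑_l N |ĝ(l)|² |f̂(l)|²` and `‖f‖²` into `∑_l |f̂(l)|²`. As `f̂` ranges over all of `ℂ^N`,
the frame inequalities hold exactly when `A ≤ N |ĝ(l)|² ≤ B` for every `l` (test with `f = χ_l`).
-/

open scoped InnerProductSpace

noncomputable def Orthonormal.toOrthonormalBasisOfCardEqFinrank {ι 𝕜 E : Type*} [Fintype ι]
    [RCLike 𝕜] [NormedAddCommGroup E] [InnerProductSpace 𝕜 E] [FiniteDimensional 𝕜 E]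
    {v : ι → E} (hv : Orthonormal 𝕜 v) (card_eq : Fintype.card ι = Module.finrank 𝕜 E) :
    OrthonormalBasis ι 𝕜 E :=
  OrthonormalBasis.mk hv (hv.linearIndependent.span_eq_top_of_card_eq_finrank' card_eq).ge

@[simp]
theorem Orthonormal.coe_toOrthonormalBasisOfCardEqFinrank {ι 𝕜 E : Type*} [Fintype ι]
    [RCLike 𝕜] [NormedAddCommGroup E] [InnerProductSpace 𝕜 E] [FiniteDimensional 𝕜 E]
    {v : ι → E} (hv : Orthonormal 𝕜 v) (card_eq : Fintype.card ι = Module.finrank 𝕜 E) :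
    ⇑(hv.toOrthonormalBasisOfCardEqFinrank card_eq) = v :=
  OrthonormalBasis.coe_mk _ _

theorem forall_weighted_sum_norm_sq_bounds_iff {ι 𝕜 : Type*} [Fintype ι]
    [NormedRing 𝕜] [NormOneClass 𝕜] (w : ι → ℝ) (A B : ℝ) :
    (∀ c : ι → 𝕜, A * ∑ i, ‖c i‖ ^ 2 ≤ ∑ i, w i * ‖c i‖ ^ 2 ∧
        ∑ i, w i * ‖c i‖ ^ 2 ≤ B * ∑ i, ‖c i‖ ^ 2) ↔
      ∀ i, A ≤ w i ∧ w i ≤ B := by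
  classical
  constructor
  · intro h i
    simpa [Pi.single_apply, apply_ite] using h (Pi.single i 1)
  · intro h c
    rw [Finset.mul_sum, Finset.mul_sum]
    exact ⟨Finset.sum_le_sum fun i _ => by gcongr; exact (h i).1,
      Finset.sum_le_sum fun i _ => by gcongr; exact (h i).2⟩

section GraphFourier

variable {N : ℕ} {χ : Fin N → EuclideanSpace ℂ (Fin N)}

theorem gft_apply (f : EuclideanSpace ℂ (Fin N)) (l : Fin N) : gft χ f l = ⟪χ l, f⟫_ℂ := by
  simp [gft, PiLp.inner_apply]

theorem sum_norm_sq_gft (hχ : Orthonormal ℂ χ) (f : EuclideanSpace ℂ (Fin N)) :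
    ∑ l, ‖gft χ f l‖ ^ 2 = ‖f‖ ^ 2 := by
  simpa [gft_apply] using
    (hχ.toOrthonormalBasisOfCardEqFinrank (by simp)).sum_sq_norm_inner_right f

theorem gft_surjective (hχ : Orthonormal ℂ χ) : Function.Surjective fun f l => gft χ f l := by
  intro c
  set b := hχ.toOrthonormalBasisOfCardEqFinrank (by simp)
  refine ⟨b.repr.symm (WithLp.toLp 2 c), funext fun l => ?_⟩
  have hb : ⇑b = χ := hχ.coe_toOrthonormalBasisOfCardEqFinrank _
  simp only [gft_apply, ← hb, ← b.repr_apply_apply, LinearIsometryEquiv.apply_symm_apply]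

theorem sum_mul_conj_gtrans (f g : EuclideanSpace ℂ (Fin N)) (i : Fin N) :
    ∑ n, f n * conj (gtrans χ i g n) =
      Real.sqrt N * ∑ l, gft χ f l * conj (gft χ g l) * χ l i := by
  simp only [gtrans, PiLp.toLp_apply, map_mul, map_sum, Complex.conj_ofReal, Complex.conj_conj,
    Finset.mul_sum]
  rw [Finset.sum_comm]
  refine Finset.sum_congr rfl fun l _ => ?_
  rw [show gft χ f l = ∑ n, f n * conj (χ l n) from rfl, Finset.sum_mul, Finset.sum_mul,
    Finset.mul_sum]
  exact Finset.sum_congr rfl fun n _ => by ring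

theorem sum_norm_sq_sum_mul_conj_gtrans (hχ : Orthonormal ℂ χ) (f g : EuclideanSpace ℂ (Fin N)) :
    ∑ i, ‖∑ n, f n * conj (gtrans χ i g n)‖ ^ 2 =
      ∑ l, N * ‖gft χ g l‖ ^ 2 * ‖gft χ f l‖ ^ 2 := by
  set b := hχ.toOrthonormalBasisOfCardEqFinrank (by simp)
  set c : EuclideanSpace ℂ (Fin N) := WithLp.toLp 2 fun l => gft χ f l * conj (gft χ g l)
  have hc : ∀ i, ∑ l, gft χ f l * conj (gft χ g l) * χ l i = b.repr.symm c i := by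
    intro i
    simp [← b.sum_repr_symm, b, c]
  calc ∑ i, ‖∑ n, f n * conj (gtrans χ i g n)‖ ^ 2
      = ∑ i, N * ‖b.repr.symm c i‖ ^ 2 := by simp [sum_mul_conj_gtrans, hc, mul_pow]
    _ = N * ‖c‖ ^ 2 := by rw [← Finset.mul_sum, ← EuclideanSpace.norm_sq_eq, b.repr.symm.norm_map]
    _ = ∑ l, N * ‖gft χ g l‖ ^ 2 * ‖gft χ f l‖ ^ 2 := by
        simp [EuclideanSpace.norm_sq_eq, c, Finset.mul_sum, mul_pow, mul_comm, mul_left_comm]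

end GraphFourier

theorem translates_frame_iff_general {N : ℕ}
    (χ : Fin N → EuclideanSpace ℂ (Fin N)) (hχ : Orthonormal ℂ χ)
    (g : EuclideanSpace ℂ (Fin N)) (A B : ℝ) (hB : 0 < B) :
    (∀ f : EuclideanSpace ℂ (Fin N),
        A * ‖f‖ ^ 2 ≤ ∑ i : Fin N,
            ‖∑ n, f n * conj (gtrans χ i g n)‖ ^ 2 ∧
        ∑ i : Fin N,
            ‖∑ n, f n * conj (gtrans χ i g n)‖ ^ 2 ≤ B * ‖f‖ ^ 2) ↔
    (∀ l : Fin N,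
        Real.sqrt (A / N) ≤ ‖gft χ g l‖ ∧
        ‖gft χ g l‖ ≤ Real.sqrt (B / N)) := by
  simp only [sum_norm_sq_sum_mul_conj_gtrans hχ, ← sum_norm_sq_gft hχ]
  refine ((gft_surjective hχ).forall.symm.trans
    (forall_weighted_sum_norm_sq_bounds_iff _ A B)).trans ?_
  refine forall_congr' fun l => and_congr ?_ ?_
  · rw [Real.sqrt_le_left (norm_nonneg _), div_le_iff₀' (by exact_mod_cast l.pos)]
  · rw [Real.le_sqrt (norm_nonneg _) (by positivity), le_div_iff₀' (by exact_mod_cast l.pos)]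

/-- `{T_i g : 1 ≤ i ≤ N}` is a frame for `ℂ^N` with frame bounds `A, B` iff
`√(A/N) ≤ |ĝ(l)| ≤ √(B/N)` for all `l`. -/
theorem translates_frame_iff {N : ℕ} (hN : 0 < N)
    (χ : Fin N → EuclideanSpace ℂ (Fin N)) (hχ : Orthonormal ℂ χ)
    (hspan : Submodule.span ℂ (Set.range χ) = ⊤)
    (g : EuclideanSpace ℂ (Fin N)) (A B : ℝ) (hA : 0 < A) (hB : 0 < B) :
    (∀ f : EuclideanSpace ℂ (Fin N),
        A * ‖f‖ ^ 2 ≤ ∑ i : Fin N,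
            ‖∑ n, f n * conj (gtrans χ i g n)‖ ^ 2 ∧
        ∑ i : Fin N,
            ‖∑ n, f n * conj (gtrans χ i g n)‖ ^ 2 ≤ B * ‖f‖ ^ 2) ↔
    (∀ l : Fin N,
        Real.sqrt (A / N) ≤ ‖gft χ g l‖ ∧
        ‖gft χ g l‖ ≤ Real.sqrt (B / N)) :=
  translates_frame_iff_general χ hχ g A B hB
end

section
/- Let g ∈ ℂ^N be such that {T_i g : 1 ≤ i ≤ N} is a frame for ℂ^N (equivalently ĝ(l) ≠ 0 for all l), and let S f = Σ_{p=1}^N ⟨f, T_p g⟩ · T_p g be the associated frame operator. Then S is invertible, the canonical dual frame {S⁻¹(T_i g) : 1 ≤ i ≤ N} equals {T_i(S⁻¹ g) : 1 ≤ i ≤ N} (i.e. S⁻¹(T_i g) = T_i(S⁻¹ g) for every i), and the graph Fourier transform of S⁻¹ g is given by (S⁻¹ g)^(l) = ĝ(l)/(N·|ĝ(l)|²) = 1/(N·conj(ĝ(l))) for all 1 ≤ l ≤ N. -/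
open scoped ComplexConjugate BigOperators

/-!
In the Fourier basis `(χ_l)` every generalized translation is diagonal: `T_i` multiplies `f̂(l)`
by `√N · conj (χ_l(i))`. Since the columns `p ↦ χ_l(p)` are orthonormal as well, the frame operator
`S f = ∑_p ⟨f, T_p g⟩ T_p g` is then diagonal with symbol `N |ĝ(l)|²`, which vanishes nowhere.
Hence `S⁻¹` is the diagonal operator with the reciprocal symbol, and it commutes with every `T_i`
because diagonal operators commute.
-/

open scoped InnerProductSpace

namespace OrthonormalBasis

variable {ι 𝕜 E : Type*} [Fintype ι] [RCLike 𝕜] [NormedAddCommGroup E] [InnerProductSpace 𝕜 E]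
  (b : OrthonormalBasis ι 𝕜 E)

noncomputable def multiplier (m : ι → 𝕜) (f : E) : E :=
  b.repr.symm (WithLp.toLp 2 fun i => m i * b.repr f i)

@[simp]
theorem repr_multiplier (m : ι → 𝕜) (f : E) (i : ι) :
    b.repr (b.multiplier m f) i = m i * b.repr f i := by
  simp [multiplier]

theorem multiplier_eq_sum (m : ι → 𝕜) (f : E) :
    b.multiplier m f = ∑ i, (m i * b.repr f i) • b i :=
  (b.sum_repr_symm _).symm

theorem multiplier_multiplier (m m' : ι → 𝕜) (f : E) :
    b.multiplier m (b.multiplier m' f) = b.multiplier (m * m') f :=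
  b.repr.injective <| by ext i; simp [mul_assoc]

theorem multiplier_comm (m m' : ι → 𝕜) (f : E) :
    b.multiplier m (b.multiplier m' f) = b.multiplier m' (b.multiplier m f) := by
  rw [multiplier_multiplier, multiplier_multiplier, mul_comm]

theorem multiplier_one (f : E) : b.multiplier 1 f = f :=
  b.repr.injective <| by ext i; simp

theorem multiplier_multiplier_inv {m : ι → 𝕜} (hm : ∀ i, m i ≠ 0) (f : E) :
    b.multiplier m (b.multiplier m⁻¹ f) = f := by
  rw [multiplier_multiplier, show m * m⁻¹ = 1 from funext fun i => mul_inv_cancel₀ (hm i),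
    multiplier_one]

theorem multiplier_inv_multiplier {m : ι → 𝕜} (hm : ∀ i, m i ≠ 0) (f : E) :
    b.multiplier m⁻¹ (b.multiplier m f) = f := by
  rw [multiplier_comm, multiplier_multiplier_inv b hm]

end OrthonormalBasis

section FrameOperator

variable {ι 𝕜 E : Type*} [Fintype ι] [RCLike 𝕜] [NormedAddCommGroup E] [InnerProductSpace 𝕜 E]

variable (𝕜) in
noncomputable def frameOperator (u : ι → E) (f : E) : E :=
  ∑ p, ⟪u p, f⟫_𝕜 • u p

theorem frameOperator_apply {κ : Type*} [Fintype κ] (u : ι → EuclideanSpace 𝕜 κ)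
    (f : EuclideanSpace 𝕜 κ) (n : κ) :
    frameOperator 𝕜 u f n = ∑ p, (∑ n', f n' * conj (u p n')) * u p n := by
  simp [frameOperator, WithLp.ofLp_sum, PiLp.inner_apply, mul_comm]

end FrameOperator

section GraphFourier

variable {N : ℕ} (b : OrthonormalBasis (Fin N) ℂ (EuclideanSpace ℂ (Fin N)))

theorem gft_eq_repr (f : EuclideanSpace ℂ (Fin N)) : gft b f = b.repr f := by
  ext l
  simp [gft, b.repr_apply_apply, PiLp.inner_apply]

theorem sum_mul_conj_eq_ite (l l' : Fin N) :
    ∑ p, b l' p * conj (b l p) = if l = l' then 1 else 0 := by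
  rw [← b.inner_eq_ite, PiLp.inner_apply]
  simp

theorem gtrans_eq_multiplier (i : Fin N) (f : EuclideanSpace ℂ (Fin N)) :
    gtrans b i f = b.multiplier (fun l => Real.sqrt N * conj (b l i)) f := by
  ext n
  simp only [gtrans, gft_eq_repr, Finset.mul_sum, b.multiplier_eq_sum, WithLp.ofLp_sum,
    Finset.sum_apply, PiLp.smul_apply, smul_eq_mul]
  exact Finset.sum_congr rfl fun _ _ => by ring

theorem inner_gtrans (p : Fin N) (g f : EuclideanSpace ℂ (Fin N)) :
    ⟪gtrans b p g, f⟫_ℂ = Real.sqrt N * ∑ l, b l p * conj (gft b g l) * gft b f l := by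
  rw [← b.repr.inner_map_map, gtrans_eq_multiplier, PiLp.inner_apply]
  simp only [OrthonormalBasis.repr_multiplier, RCLike.inner_apply, map_mul, Complex.conj_ofReal,
    Complex.conj_conj, gft_eq_repr, Finset.mul_sum]
  exact Finset.sum_congr rfl fun _ _ => by ring

theorem frameOperator_gtrans (g f : EuclideanSpace ℂ (Fin N)) :
    frameOperator ℂ (fun p => gtrans b p g) f =
      b.multiplier (fun l => (N : ℂ) * (‖gft b g l‖ ^ 2 : ℝ)) f := by
  refine b.repr.injective ?_
  ext l
  simp only [frameOperator, map_sum, map_smul, inner_gtrans]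
  simp only [gtrans_eq_multiplier, WithLp.ofLp_sum, Finset.sum_apply, PiLp.smul_apply,
    OrthonormalBasis.repr_multiplier, smul_eq_mul, gft_eq_repr]
  set r : ℂ := (Real.sqrt N : ℂ)
  have hr : r * r = N := by
    rw [← Complex.ofReal_mul, Real.mul_self_sqrt N.cast_nonneg, Complex.ofReal_natCast]
  calc _ = ∑ x, r * r * b.repr g l * conj (b.repr g x) * b.repr f x *
          ∑ c, b x c * conj (b l c) := by
        simp only [Finset.sum_mul, Finset.mul_sum]
        rw [Finset.sum_comm]
        exact Finset.sum_congr rfl fun _ _ => Finset.sum_congr rfl fun _ _ => by ring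
    _ = r * r * (b.repr g l * conj (b.repr g l)) * b.repr f l := by
        simp [sum_mul_conj_eq_ite, mul_assoc]
    _ = _ := by
        rw [hr, Complex.mul_conj, Complex.normSq_eq_norm_sq, Complex.ofReal_pow]

end GraphFourier

theorem canonical_dual_frame_of_translates_general {N : ℕ}
    (χ : Fin N → EuclideanSpace ℂ (Fin N)) (hχ : Orthonormal ℂ χ)
    (hspan : Submodule.span ℂ (Set.range χ) = ⊤)
    (g : EuclideanSpace ℂ (Fin N))
    (hg : ∀ l : Fin N, gft χ g l ≠ 0)
    (S : EuclideanSpace ℂ (Fin N) → EuclideanSpace ℂ (Fin N))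
    (hS : ∀ f : EuclideanSpace ℂ (Fin N), ∀ n : Fin N,
        S f n = ∑ p : Fin N, (∑ n', f n' * conj (gtrans χ p g n')) * gtrans χ p g n) :
    ∃ Sinv : EuclideanSpace ℂ (Fin N) → EuclideanSpace ℂ (Fin N),
      (∀ f : EuclideanSpace ℂ (Fin N), S (Sinv f) = f ∧ Sinv (S f) = f) ∧
      (∀ i : Fin N, Sinv (gtrans χ i g) = gtrans χ i (Sinv g)) ∧
      (∀ l : Fin N,
        gft χ (Sinv g) l = gft χ g l / ((N : ℂ) * (‖gft χ g l‖ ^ 2 : ℝ)) ∧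
        gft χ (Sinv g) l = 1 / ((N : ℂ) * conj (gft χ g l))) := by
  obtain ⟨b, rfl⟩ : ∃ b : OrthonormalBasis (Fin N) ℂ (EuclideanSpace ℂ (Fin N)), ⇑b = χ :=
    ⟨_, OrthonormalBasis.coe_mk hχ hspan.ge⟩
  set d : Fin N → ℂ := fun l => (N : ℂ) * (‖gft b g l‖ ^ 2 : ℝ)
  have hN : ∀ l : Fin N, (N : ℂ) ≠ 0 := fun l => Nat.cast_ne_zero.mpr l.pos.ne'
  have hd : ∀ l, d l ≠ 0 := fun l => mul_ne_zero (hN l) (by simpa using hg l)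
  obtain rfl : S = b.multiplier d := funext fun f => by
    ext n
    rw [hS, ← frameOperator_apply, frameOperator_gtrans]
  refine ⟨b.multiplier d⁻¹, fun f => ⟨b.multiplier_multiplier_inv hd f,
    b.multiplier_inv_multiplier hd f⟩, fun i => ?_, fun l => ⟨?_, ?_⟩⟩
  · rw [gtrans_eq_multiplier, gtrans_eq_multiplier, b.multiplier_comm]
  · rw [gft_eq_repr, b.repr_multiplier, ← gft_eq_repr]
    simp [d, div_eq_inv_mul]
  · rw [gft_eq_repr, b.repr_multiplier, ← gft_eq_repr]
    simp only [Pi.inv_apply, d, Complex.ofReal_pow, ← Complex.mul_conj']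
    field_simp [hN l, hg l]

/-- If `{T_i g}` is a frame for `ℂ^N` (equivalently `ĝ(l) ≠ 0` for all `l`), then the
frame operator `S` is invertible, the canonical dual frame is `{T_i (S⁻¹ g)}`, and
`(S⁻¹ g)^(l) = ĝ(l)/(N·|ĝ(l)|²) = 1/(N·conj(ĝ(l)))`. -/
theorem canonical_dual_frame_of_translates {N : ℕ} (hN : 0 < N)
    (χ : Fin N → EuclideanSpace ℂ (Fin N)) (hχ : Orthonormal ℂ χ)
    (hspan : Submodule.span ℂ (Set.range χ) = ⊤)
    (g : EuclideanSpace ℂ (Fin N))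
    (hg : ∀ l : Fin N, gft χ g l ≠ 0)
    (S : EuclideanSpace ℂ (Fin N) → EuclideanSpace ℂ (Fin N))
    (hS : ∀ f : EuclideanSpace ℂ (Fin N), ∀ n : Fin N,
        S f n = ∑ p : Fin N, (∑ n', f n' * conj (gtrans χ p g n')) * gtrans χ p g n) :
    ∃ Sinv : EuclideanSpace ℂ (Fin N) → EuclideanSpace ℂ (Fin N),
      (∀ f : EuclideanSpace ℂ (Fin N), S (Sinv f) = f ∧ Sinv (S f) = f) ∧
      (∀ i : Fin N, Sinv (gtrans χ i g) = gtrans χ i (Sinv g)) ∧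
      (∀ l : Fin N,
        gft χ (Sinv g) l = gft χ g l / ((N : ℂ) * (‖gft χ g l‖ ^ 2 : ℝ)) ∧
        gft χ (Sinv g) l = 1 / ((N : ℂ) * conj (gft χ g l))) :=
  canonical_dual_frame_of_translates_general χ hχ hspan g hg S hS
end
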